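/- For a finite group G with a normalized 3-cocycle ω, the operator P^ω := (1/|G|)·Σ_{g∈G} V^ω(g) on (ℂG)^{⊗3} is a Hermitian projection (P^ω² = P^ω = (P^ω)†) of rank |G|². -/

import Mathlib

open scoped BigOperators
open Matrix

/-- The 3-cocycle condition for a `U(1)`-valued (unit-modulus) function. -/
def IsCocycle {G : Type*} [Group G] (ω : G → G → G → ℂ) : Prop :=
  ∀ a b c d : G, ω a b c * ω a (b * c) d * ω b c d = ω (a * b) c d * ω a b (c * d)

/-- `ω` is normalized: it equals 1 whenever any argument is the identity. -/
def IsNormalized {G : Type*} [Group G] (ω : G → G → G → ℂ) : Prop :=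
  ∀ a b c : G, a = 1 ∨ b = 1 ∨ c = 1 → ω a b c = 1

/-- `ω` takes values on the unit circle. -/
def IsUnitary {G : Type*} [Group G] (ω : G → G → G → ℂ) : Prop :=
  ∀ a b c : G, ‖ω a b c‖ = 1

/-- The twisted symmetry operator `V^ω(g)` on `(ℂG)^{⊗3}`, written as a matrix with
respect to the group-element basis of triples `(α,β,γ)`.  Its only nonzero entries are
`⟨αg⁻¹, βg⁻¹, γg⁻¹| V^ω(g) |α,β,γ⟩ = ω(γα⁻¹, αg⁻¹, g) / (ω(βα⁻¹, αg⁻¹, g)·ω(γβ⁻¹, βg⁻¹, g))`. -/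
noncomputable def Vmat {G : Type*} [Group G] [DecidableEq G]
    (ω : G → G → G → ℂ) (g : G) : Matrix (G × G × G) (G × G × G) ℂ :=
  fun r c =>
    if r = (c.1 * g⁻¹, c.2.1 * g⁻¹, c.2.2 * g⁻¹) then
      ω (c.2.2 * c.1⁻¹) (c.1 * g⁻¹) g /
        (ω (c.2.1 * c.1⁻¹) (c.1 * g⁻¹) g * ω (c.2.2 * c.2.1⁻¹) (c.2.1 * g⁻¹) g)
    else 0

/-- The twisted symmetrizer `P^ω = (1/|G|) Σ_g V^ω(g)`. -/
noncomputable def Pmat (G : Type*) [Group G] [Fintype G] [DecidableEq G]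
    (ω : G → G → G → ℂ) : Matrix (G × G × G) (G × G × G) ℂ :=
  (Fintype.card G : ℂ)⁻¹ • ∑ g : G, Vmat ω g

/-! `V^ω(g)` is a weighted permutation matrix: it translates triples by `g⁻¹` on the right,
with weight the "triangle ratio" `F(α,γ) / (F(α,β) F(β,γ))` of the edge phase
`F_g(x,y) = ω(yx⁻¹, xg⁻¹, g)`. The cocycle identity says that `F_g(xh⁻¹, yh⁻¹) F_h(x,y)` equals
`F_{gh}(x,y)` up to the coboundary of `x ↦ ω(xh⁻¹g⁻¹, g, h)`, which the triangle ratio kills.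
So `g ↦ V^ω(g)` is a unitary representation and `P^ω`, its average, is a Hermitian idempotent.
Its rank is its trace, to which only `V^ω(1) = 1` contributes, since translation by `g ≠ 1` has
no fixed triple: `tr P^ω = |G|³ / |G|`. -/

theorem Matrix.rank_eq_trace_of_isIdempotentElem {K n : Type*} [Field K] [Fintype n]
    [DecidableEq n] {A : Matrix n n K} (hA : IsIdempotentElem A) : (A.rank : K) = A.trace := by
  have he : IsIdempotentElem A.mulVecLin := by
    rw [IsIdempotentElem, Module.End.mul_eq_comp, ← Matrix.mulVecLin_mul, hA.eq]
  rw [Matrix.rank, ← (LinearMap.IsIdempotentElem.isProj_range _ he).trace,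
    ← Matrix.toLin'_apply', Matrix.trace_toLin'_eq]

section WeightedPerm

variable {n R : Type*} [DecidableEq n]

def weightedPermMatrix [Zero R] (σ : Equiv.Perm n) (w : n → R) : Matrix n n R :=
  fun r c => if r = σ c then w c else 0

theorem weightedPermMatrix_one [Zero R] (w : n → R) :
    weightedPermMatrix 1 w = Matrix.diagonal w := by
  ext r c
  by_cases h : r = c <;> simp [weightedPermMatrix, h]

theorem weightedPermMatrix_mul [Fintype n] [NonUnitalNonAssocSemiring R]
    (σ τ : Equiv.Perm n) (w v : n → R) :
    weightedPermMatrix σ w * weightedPermMatrix τ v =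
      weightedPermMatrix (σ * τ) (fun c => w (τ c) * v c) := by
  ext r c
  simp only [Matrix.mul_apply, weightedPermMatrix, mul_ite, ite_mul, zero_mul, mul_zero,
    Finset.sum_ite_eq', Finset.mem_univ, ↓reduceIte, Equiv.Perm.coe_mul, Function.comp_apply]
  rfl

theorem conjTranspose_weightedPermMatrix [AddMonoid R] [StarAddMonoid R]
    (σ : Equiv.Perm n) (w : n → R) :
    (weightedPermMatrix σ w)ᴴ = weightedPermMatrix σ⁻¹ (fun c => star (w (σ⁻¹ c))) := by
  ext r c
  simp only [Matrix.conjTranspose_apply, weightedPermMatrix]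
  split_ifs with h₁ h₂ h₂ <;> simp_all

theorem conjTranspose_weightedPermMatrix_mul_self [Fintype n] [Semiring R] [StarRing R]
    (σ : Equiv.Perm n) (w : n → R) :
    (weightedPermMatrix σ w)ᴴ * weightedPermMatrix σ w =
      Matrix.diagonal (fun c => star (w c) * w c) := by
  rw [conjTranspose_weightedPermMatrix, weightedPermMatrix_mul, inv_mul_cancel,
    weightedPermMatrix_one]
  simp

theorem trace_weightedPermMatrix_eq_zero_of_forall_apply_ne [Fintype n] [AddCommMonoid R]
    {σ : Equiv.Perm n} (hσ : ∀ c, σ c ≠ c) (w : n → R) :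
    (weightedPermMatrix σ w).trace = 0 :=
  Finset.sum_eq_zero fun c _ => if_neg (hσ c).symm

end WeightedPerm

section TriangleRatio

variable {X K : Type*} [Field K]

def triangleRatio (F : X → X → K) (c : X × X × X) : K :=
  F c.1 c.2.2 / (F c.1 c.2.1 * F c.2.1 c.2.2)

theorem triangleRatio_mul (F F' : X → X → K) :
    triangleRatio (F * F') = triangleRatio F * triangleRatio F' := by
  funext c
  simp only [triangleRatio, Pi.mul_apply]
  ring

theorem triangleRatio_eq_of_coboundary {F F' : X → X → K} (f : X → K) (hf : ∀ x, f x ≠ 0)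
    (h : ∀ x y, F' x y * f x = f y * F x y) : triangleRatio F' = triangleRatio F := by
  have hF' : F' = fun x y => f y * F x y / f x := by
    funext x y
    rw [eq_div_iff (hf x), h]
  funext c
  simp only [triangleRatio, hF']
  field_simp [hf]

end TriangleRatio

section Cocycle

variable {G : Type*} [Group G] {ω : G → G → G → ℂ}

theorem IsUnitary.ne_zero (hu : IsUnitary ω) (a b c : G) : ω a b c ≠ 0 :=
  norm_ne_zero_iff.mp (by rw [hu a b c]; exact one_ne_zero)

def edgePhase (ω : G → G → G → ℂ) (g x y : G) : ℂ :=
  ω (y * x⁻¹) (x * g⁻¹) g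

theorem IsCocycle.edgePhase_mul (hω : IsCocycle ω) (g h x y : G) :
    edgePhase ω g (x * h⁻¹) (y * h⁻¹) * edgePhase ω h x y * ω (x * h⁻¹ * g⁻¹) g h =
      ω (y * h⁻¹ * g⁻¹) g h * edgePhase ω (g * h) x y := by
  have hcoc := hω (y * x⁻¹) (x * h⁻¹ * g⁻¹) g h
  rw [show x * h⁻¹ * g⁻¹ * g = x * h⁻¹ by group,
    show y * x⁻¹ * (x * h⁻¹ * g⁻¹) = y * h⁻¹ * g⁻¹ by group] at hcoc
  rwa [edgePhase, edgePhase, edgePhase, show y * h⁻¹ * (x * h⁻¹)⁻¹ = y * x⁻¹ by group,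
    show x * (g * h)⁻¹ = x * h⁻¹ * g⁻¹ by group]

theorem IsCocycle.triangleRatio_edgePhase_mul (hu : IsUnitary ω) (hω : IsCocycle ω)
    (g h : G) (c : G × G × G) :
    triangleRatio (edgePhase ω g) (c * (h, h, h)⁻¹) * triangleRatio (edgePhase ω h) c =
      triangleRatio (edgePhase ω (g * h)) c := by
  have hshift : triangleRatio (edgePhase ω g) (c * (h, h, h)⁻¹) =
      triangleRatio (fun x y => edgePhase ω g (x * h⁻¹) (y * h⁻¹)) c := rfl
  rw [hshift, ← Pi.mul_apply _ _ c, ← triangleRatio_mul,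
    triangleRatio_eq_of_coboundary (F' := (fun x y => edgePhase ω g (x * h⁻¹) (y * h⁻¹)) * _)
      (fun x => ω (x * h⁻¹ * g⁻¹) g h) (fun x => hu.ne_zero _ _ _)
      (hω.edgePhase_mul g h)]

theorem IsUnitary.norm_triangleRatio_edgePhase (hu : IsUnitary ω) (g : G) (c : G × G × G) :
    ‖triangleRatio (edgePhase ω g) c‖ = 1 := by
  simp [triangleRatio, edgePhase, hu _ _ _]

end Cocycle

section Average

variable {G M K : Type*} [Group G] [Fintype G] [Field K] [Semiring M] [Algebra K M]

theorem MonoidHom.isIdempotentElem_average [CharZero K] (ρ : G →* M) :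
    IsIdempotentElem ((Fintype.card G : K)⁻¹ • ∑ g, ρ g) := by
  have hsum : (∑ g, ρ g) * ∑ g, ρ g = (Fintype.card G : K) • ∑ g, ρ g := by
    calc (∑ g, ρ g) * ∑ g, ρ g = ∑ g : G, ∑ h, ρ (g * h) := by
          simp only [Finset.sum_mul_sum, map_mul]
      _ = ∑ _g : G, ∑ h, ρ h :=
          Finset.sum_congr rfl fun g _ => Fintype.sum_equiv (Equiv.mulLeft g) _ _ fun _ => rfl
      _ = (Fintype.card G : K) • ∑ g, ρ g := by
          rw [Finset.sum_const, Finset.card_univ, Nat.cast_smul_eq_nsmul]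
  have hcard : (Fintype.card G : K) ≠ 0 := Nat.cast_ne_zero.mpr Fintype.card_ne_zero
  rw [IsIdempotentElem, smul_mul_smul_comm, hsum, smul_smul, inv_mul_cancel_right₀ hcard]

theorem MonoidHom.star_average [StarRing K] [StarRing M] [StarModule K M] (ρ : G →* M)
    (hρ : ∀ g, star (ρ g) = ρ g⁻¹) :
    star ((Fintype.card G : K)⁻¹ • ∑ g, ρ g) = (Fintype.card G : K)⁻¹ • ∑ g, ρ g := by
  rw [star_smul, star_sum, star_inv₀, star_natCast]
  congr 1
  simp only [hρ]
  exact Fintype.sum_equiv (Equiv.inv G) _ _ fun _ => rfl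

end Average

section Twisted

variable {G : Type*} [Group G] [DecidableEq G] {ω : G → G → G → ℂ}

theorem Vmat_eq_weightedPermMatrix (ω : G → G → G → ℂ) (g : G) :
    Vmat ω g = weightedPermMatrix (Equiv.mulRight (g, g, g)⁻¹) (triangleRatio (edgePhase ω g)) :=
  rfl

variable [Fintype G]

theorem Vmat_mul (hu : IsUnitary ω) (hω : IsCocycle ω) (g h : G) :
    Vmat ω g * Vmat ω h = Vmat ω (g * h) := by
  rw [Vmat_eq_weightedPermMatrix, Vmat_eq_weightedPermMatrix, Vmat_eq_weightedPermMatrix,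
    weightedPermMatrix_mul]
  congr 1
  · ext c <;> simp [mul_assoc]
  · exact funext (hω.triangleRatio_edgePhase_mul hu g h)

theorem conjTranspose_Vmat_mul_self (hu : IsUnitary ω) (g : G) :
    (Vmat ω g)ᴴ * Vmat ω g = 1 := by
  rw [Vmat_eq_weightedPermMatrix, conjTranspose_weightedPermMatrix_mul_self,
    ← Matrix.diagonal_one]
  congr 1
  funext c
  rw [Complex.star_def, Complex.conj_mul', hu.norm_triangleRatio_edgePhase]
  norm_num

-- `V(1)` is an idempotent with a left inverse, hence the identity.
theorem Vmat_one (hu : IsUnitary ω) (hω : IsCocycle ω) : Vmat ω (1 : G) = 1 :=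
  calc Vmat ω 1 = (Vmat ω 1)ᴴ * Vmat ω 1 * Vmat ω 1 := by
        rw [conjTranspose_Vmat_mul_self hu, one_mul]
    _ = 1 := by rw [mul_assoc, Vmat_mul hu hω, mul_one, conjTranspose_Vmat_mul_self hu]

noncomputable def twistedRep (hu : IsUnitary ω) (hω : IsCocycle ω) :
    G →* Matrix (G × G × G) (G × G × G) ℂ where
  toFun := Vmat ω
  map_one' := Vmat_one hu hω
  map_mul' g h := (Vmat_mul hu hω g h).symm

theorem conjTranspose_Vmat (hu : IsUnitary ω) (hω : IsCocycle ω) (g : G) :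
    (Vmat ω g)ᴴ = Vmat ω g⁻¹ :=
  left_inv_eq_right_inv (conjTranspose_Vmat_mul_self hu g)
    (by rw [Vmat_mul hu hω, mul_inv_cancel, Vmat_one hu hω])

theorem trace_Vmat_of_ne_one (ω : G → G → G → ℂ) {g : G} (hg : g ≠ 1) :
    (Vmat ω g).trace = 0 := by
  rw [Vmat_eq_weightedPermMatrix]
  exact trace_weightedPermMatrix_eq_zero_of_forall_apply_ne
    (fun c => by simpa [Prod.ext_iff] using hg) _

theorem trace_Pmat (hu : IsUnitary ω) (hω : IsCocycle ω) :
    (Pmat G ω).trace = (Fintype.card G : ℂ) ^ 2 := by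
  rw [Pmat, Matrix.trace_smul, Matrix.trace_sum,
    Finset.sum_eq_single_of_mem 1 (Finset.mem_univ _) fun g _ hg => trace_Vmat_of_ne_one ω hg,
    Vmat_one hu hω, Matrix.trace_one, Fintype.card_prod, Fintype.card_prod, smul_eq_mul]
  push_cast
  field_simp

end Twisted

theorem Pmat_projection_general {G : Type*} [Group G] [Fintype G] [DecidableEq G]
    (ω : G → G → G → ℂ) (hu : IsUnitary ω) (hω : IsCocycle ω) :
    Pmat G ω * Pmat G ω = Pmat G ω ∧ (Pmat G ω)ᴴ = Pmat G ω ∧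
      (Pmat G ω).rank = Fintype.card G ^ 2 := by
  have hP : Pmat G ω = (Fintype.card G : ℂ)⁻¹ • ∑ g, twistedRep hu hω g := rfl
  have hidem : IsIdempotentElem (Pmat G ω) := hP ▸ (twistedRep hu hω).isIdempotentElem_average
  refine ⟨hidem, ?_, ?_⟩
  · rw [← Matrix.star_eq_conjTranspose, hP]
    exact (twistedRep hu hω).star_average (conjTranspose_Vmat hu hω)
  · exact_mod_cast (Matrix.rank_eq_trace_of_isIdempotentElem hidem).trans (trace_Pmat hu hω)

theorem Pmat_projection {G : Type*} [Group G] [Fintype G] [DecidableEq G]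
    (ω : G → G → G → ℂ) (hu : IsUnitary ω) (hω : IsCocycle ω) (hn : IsNormalized ω) :
    Pmat G ω * Pmat G ω = Pmat G ω ∧ (Pmat G ω)ᴴ = Pmat G ω ∧
      (Pmat G ω).rank = Fintype.card G ^ 2 :=
  Pmat_projection_general ω hu hω
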